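/- arXiv:2402.12653 — 3 statements merged into one kernel-verified Lean document; each statement's English description precedes it below -/
import Mathlib

section
/- (Theorem 1, expectation formula) Under the full-population Bernoulli design with treatment probability π, the estimator τ̂(π) = τ̂¹(π) + τ̂²(π) satisfies E[τ̂(π)] = (1/n) Σ_{i ≠ j} (β_{i,j} + γ_{i,j} + 2π ζ_{i,j}). -/
open Finset

noncomputable section

/-- Real-valued indicator of a Boolean. -/
def ind (b : Bool) : ℝ := if b then 1 else 0

/-- Dyadic linear potential-outcome model for an ordered pair `(i, j)`:
`z_{i,j}(W) = α_{i,j} + β_{i,j} W_i + γ_{i,j} W_j + ζ_{i,j} W_i W_j`. -/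
def zDyad {n : ℕ} (α β γ ζ : Fin n → Fin n → ℝ) (W : Fin n → ℝ) (i j : Fin n) : ℝ :=
  α i j + β i j * W i + γ i j * W j + ζ i j * W i * W j

/-- Upstream-aggregated outcome `Y_j(W) = Σ_{i ≠ j} z_{i,j}(W)`. -/
def Yagg {n : ℕ} (α β γ ζ : Fin n → Fin n → ℝ) (W : Fin n → ℝ) (j : Fin n) : ℝ :=
  ∑ i ∈ ({j}ᶜ : Finset (Fin n)), zDyad α β γ ζ W i j

/-- Downstream-aggregated outcome (diffusion metric) `D_j(W) = Σ_{i ≠ j} z_{j,i}(W)`. -/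
def Dagg {n : ℕ} (α β γ ζ : Fin n → Fin n → ℝ) (W : Fin n → ℝ) (j : Fin n) : ℝ :=
  ∑ i ∈ ({j}ᶜ : Finset (Fin n)), zDyad α β γ ζ W j i

/-- Expectation over `n` i.i.d. Bernoulli(`q`) treatment assignments: the weighted sum
over all assignment vectors `w ∈ {0,1}^n` with product Bernoulli weights. -/
def expectBern (n : ℕ) (q : ℝ) (f : (Fin n → Bool) → ℝ) : ℝ :=
  ∑ w : Fin n → Bool, (∏ i, if w i then q else 1 - q) * f w

/-- Horvitz–Thompson estimator built from `Y`:
`τ̂¹(q)(w) = (1/n) Σ_i [w_i Y_i(w)/q − (1 − w_i) Y_i(w)/(1 − q)]`. -/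
def tauHat1 {n : ℕ} (α β γ ζ : Fin n → Fin n → ℝ) (q : ℝ) (w : Fin n → Bool) : ℝ :=
  (1 / (n : ℝ)) * ∑ i,
    (ind (w i) * Yagg α β γ ζ (fun k => ind (w k)) i / q -
      (1 - ind (w i)) * Yagg α β γ ζ (fun k => ind (w k)) i / (1 - q))

/-- Horvitz–Thompson estimator built from the diffusion metric `D`:
`τ̂²(q)(w) = (1/n) Σ_i [w_i D_i(w)/q − (1 − w_i) D_i(w)/(1 − q)]`. -/
def tauHat2 {n : ℕ} (α β γ ζ : Fin n → Fin n → ℝ) (q : ℝ) (w : Fin n → Bool) : ℝ :=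
  (1 / (n : ℝ)) * ∑ i,
    (ind (w i) * Dagg α β γ ζ (fun k => ind (w k)) i / q -
      (1 - ind (w i)) * Dagg α β γ ζ (fun k => ind (w k)) i / (1 - q))

section Aux

variable {n : ℕ} {q : ℝ}

lemma expectBern_add (f g : (Fin n → Bool) → ℝ) :
    expectBern n q (fun w => f w + g w) = expectBern n q f + expectBern n q g := by
  simp [expectBern, mul_add, Finset.sum_add_distrib]

lemma expectBern_const_mul (c : ℝ) (f : (Fin n → Bool) → ℝ) :
    expectBern n q (fun w => c * f w) = c * expectBern n q f := by
  simp [expectBern, Finset.mul_sum, mul_left_comm]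

lemma expectBern_sum {ι : Type*} (s : Finset ι) (f : ι → (Fin n → Bool) → ℝ) :
    expectBern n q (fun w => ∑ i ∈ s, f i w) = ∑ i ∈ s, expectBern n q (f i) := by
  simp only [expectBern, Finset.mul_sum]
  exact Finset.sum_comm

lemma expectBern_prod (g : Fin n → Bool → ℝ) :
    expectBern n q (fun w => ∏ i, g i (w i)) =
      ∏ i, (q * g i true + (1 - q) * g i false) := by
  have : ∀ i : Fin n, q * g i true + (1 - q) * g i false
      = ∑ b : Bool, (if b then q else 1 - q) * g i b := by
    intro i; rw [Fintype.sum_bool]; simp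
  simp only [this]
  rw [Finset.prod_univ_sum]
  simp only [Fintype.piFinset_univ]
  rw [expectBern]
  congr 1
  ext w
  rw [← Finset.prod_mul_distrib]

lemma expectBern_single (i : Fin n) (g : Bool → ℝ) :
    expectBern n q (fun w => g (w i)) = q * g true + (1 - q) * g false := by
  have h1 : (fun w : Fin n → Bool => g (w i)) =
      fun w => ∏ k, (if k = i then g (w k) else 1) := by
    funext w
    rw [Fintype.prod_eq_single i (fun k hk => by simp [hk])]
    simp
  rw [h1]
  have h2 := expectBern_prod (n := n) (q := q)
    (fun k b => if k = i then g b else 1)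
  rw [h2]
  rw [Fintype.prod_eq_single i (fun k hk => by simp [hk])]
  simp

lemma expectBern_pair (i j : Fin n) (hij : i ≠ j) (g g' : Bool → ℝ) :
    expectBern n q (fun w => g (w i) * g' (w j)) =
      (q * g true + (1 - q) * g false) * (q * g' true + (1 - q) * g' false) := by
  have h1 : (fun w : Fin n → Bool => g (w i) * g' (w j)) =
      fun w => ∏ k, (if k = i then g (w k) else if k = j then g' (w k) else 1) := by
    funext w
    rw [Fintype.prod_eq_mul i j hij (fun k hk => by simp [hk.1, hk.2])]
    simp [hij, hij.symm]
  rw [h1]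
  have h2 := expectBern_prod (n := n) (q := q)
    (fun k b => if k = i then g b else if k = j then g' b else 1)
  rw [h2]
  rw [Fintype.prod_eq_mul i j hij (fun k hk => by simp [hk.1, hk.2])]
  simp [hij, hij.symm]

lemma swapSum (f : Fin n → Fin n → ℝ) :
    ∑ i, ∑ j ∈ ({i}ᶜ : Finset (Fin n)), f i j
      = ∑ i, ∑ j ∈ ({i}ᶜ : Finset (Fin n)), f j i := by
  exact Finset.sum_comm' (by intro x y; simp [ne_comm, eq_comm])

/-- Expectation of a HT-weight times an affine function of two indicators. -/
lemma expectBern_ht (hq0 : q ≠ 0) (hq1 : 1 - q ≠ 0) (i j : Fin n) (hij : i ≠ j)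
    (A B C D : ℝ) :
    expectBern n q (fun w =>
      (ind (w i) / q - (1 - ind (w i)) / (1 - q)) *
        (A + B * ind (w j) + C * ind (w i) + D * ind (w i) * ind (w j)))
      = C + q * D := by
  have h1 : (fun w : Fin n → Bool =>
      (ind (w i) / q - (1 - ind (w i)) / (1 - q)) *
        (A + B * ind (w j) + C * ind (w i) + D * ind (w i) * ind (w j)))
      = fun w =>
        (fun b => (ind b / q - (1 - ind b) / (1 - q)) * (A + C * ind b)) (w i)
          + (fun b => (ind b / q - (1 - ind b) / (1 - q)) * (B + D * ind b)) (w i)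
            * (fun b => ind b) (w j) := by
    funext w; simp only; ring
  rw [h1, expectBern_add,
    expectBern_single i (fun b => (ind b / q - (1 - ind b) / (1 - q)) * (A + C * ind b)),
    expectBern_pair i j hij
      (fun b => (ind b / q - (1 - ind b) / (1 - q)) * (B + D * ind b))
      (fun b => ind b)]
  simp only [ind]
  norm_num
  field_simp
  ring

end Aux

/-- Theorem 1, expectation formula: Under the full-population Bernoulli
design with treatment probability `q`, the combined estimator `τ̂(q) = τ̂¹(q) + τ̂²(q)`
satisfies `E[τ̂(q)] = (1/n) Σ_{i ≠ j} (β_{i,j} + γ_{i,j} + 2q ζ_{i,j})`. -/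
theorem expect_tauHat_combined
    (n : ℕ) (hn : 1 ≤ n) (α β γ ζ : Fin n → Fin n → ℝ)
    (q : ℝ) (hq0 : 0 < q) (hq1 : q < 1) :
    expectBern n q (fun w => tauHat1 α β γ ζ q w + tauHat2 α β γ ζ q w) =
      (1 / (n : ℝ)) *
        ∑ j, ∑ i ∈ ({j}ᶜ : Finset (Fin n)), (β i j + γ i j + 2 * q * ζ i j) := by
  have hq0' : q ≠ 0 := ne_of_gt hq0
  have hq1' : (1 : ℝ) - q ≠ 0 := by linarith
  -- Pointwise rewriting of the estimator
  have hpt : (fun w => tauHat1 α β γ ζ q w + tauHat2 α β γ ζ q w)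
      = fun w => (1 / (n : ℝ)) * ∑ i, ∑ j ∈ ({i}ᶜ : Finset (Fin n)),
          (ind (w i) / q - (1 - ind (w i)) / (1 - q)) *
            (zDyad α β γ ζ (fun k => ind (w k)) j i
              + zDyad α β γ ζ (fun k => ind (w k)) i j) := by
    funext w
    simp only [tauHat1, tauHat2, Yagg, Dagg]
    rw [← mul_add, ← Finset.sum_add_distrib]
    congr 1
    apply Finset.sum_congr rfl
    intro i _
    rw [← Finset.mul_sum, Finset.sum_add_distrib]
    ring
  rw [hpt, expectBern_const_mul]
  congr 1
  rw [expectBern_sum]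
  have hterm : ∀ i : Fin n, ∀ j ∈ ({i}ᶜ : Finset (Fin n)),
      expectBern n q (fun w =>
        (ind (w i) / q - (1 - ind (w i)) / (1 - q)) *
          (zDyad α β γ ζ (fun k => ind (w k)) j i
            + zDyad α β γ ζ (fun k => ind (w k)) i j))
      = (γ j i + β i j) + q * (ζ j i + ζ i j) := by
    intro i j hj
    have hij : i ≠ j := by
      simp only [Finset.mem_compl, Finset.mem_singleton] at hj
      exact fun h => hj h.symm
    have heq : (fun w : Fin n → Bool =>
        (ind (w i) / q - (1 - ind (w i)) / (1 - q)) *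
          (zDyad α β γ ζ (fun k => ind (w k)) j i
            + zDyad α β γ ζ (fun k => ind (w k)) i j))
        = fun w =>
          (ind (w i) / q - (1 - ind (w i)) / (1 - q)) *
            ((α j i + α i j) + (β j i + γ i j) * ind (w j)
              + (γ j i + β i j) * ind (w i)
              + (ζ j i + ζ i j) * ind (w i) * ind (w j)) := by
      funext w; simp only [zDyad]; ring
    rw [heq, expectBern_ht hq0' hq1' i j hij]
  calc ∑ i, expectBern n q (fun w => ∑ j ∈ ({i}ᶜ : Finset (Fin n)),
        (ind (w i) / q - (1 - ind (w i)) / (1 - q)) *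
          (zDyad α β γ ζ (fun k => ind (w k)) j i
            + zDyad α β γ ζ (fun k => ind (w k)) i j))
      = ∑ i, ∑ j ∈ ({i}ᶜ : Finset (Fin n)),
          ((γ j i + β i j) + q * (ζ j i + ζ i j)) := by
        apply Finset.sum_congr rfl
        intro i _
        rw [expectBern_sum]
        exact Finset.sum_congr rfl (hterm i)
    _ = ∑ i, ∑ j ∈ ({i}ᶜ : Finset (Fin n)),
          ((β i j + q * ζ i j) + (γ j i + q * ζ j i)) := by
        apply Finset.sum_congr rfl; intro i _
        apply Finset.sum_congr rfl; intro j _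
        ring
    _ = (∑ i, ∑ j ∈ ({i}ᶜ : Finset (Fin n)), (β i j + q * ζ i j))
        + ∑ i, ∑ j ∈ ({i}ᶜ : Finset (Fin n)), (γ j i + q * ζ j i) := by
        simp [Finset.sum_add_distrib]
    _ = (∑ i, ∑ j ∈ ({i}ᶜ : Finset (Fin n)), (β i j + q * ζ i j))
        + ∑ i, ∑ j ∈ ({i}ᶜ : Finset (Fin n)), (γ i j + q * ζ i j) := by
        rw [← swapSum (fun a b => γ a b + q * ζ a b)]
    _ = ∑ i, ∑ j ∈ ({i}ᶜ : Finset (Fin n)),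
          (β i j + γ i j + 2 * q * ζ i j) := by
        rw [← Finset.sum_add_distrib]
        apply Finset.sum_congr rfl; intro i _
        rw [← Finset.sum_add_distrib]
        apply Finset.sum_congr rfl; intro j _
        ring
    _ = ∑ j, ∑ i ∈ ({j}ᶜ : Finset (Fin n)),
          (β i j + γ i j + 2 * q * ζ i j) :=
        swapSum (fun a b => β a b + γ a b + 2 * q * ζ a b)
end
end

section
/- (Proposition 5) Under the sub-population Bernoulli design with in-experiment probability p and treatment probability π, the expectation of the Horvitz–Thompson estimator built from the diffusion metric D satisfies E[τ̂²(p,π)] = (1/n) Σ_{i ≠ j} (β_{i,j} + pπ ζ_{i,j}). -/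
open Finset

noncomputable section

/-- Expectation over the sub-population design: `v ∈ {0,1}^n` are i.i.d. Bernoulli(`p`)
in-experiment indicators, `u ∈ {0,1}^n` are i.i.d. Bernoulli(`q`) treatment coins, all
`2n` variables mutually independent. -/
def expectVU (n : ℕ) (p q : ℝ) (f : (Fin n → Bool) → (Fin n → Bool) → ℝ) : ℝ :=
  ∑ v : Fin n → Bool, ∑ u : Fin n → Bool,
    (∏ i, if v i then p else 1 - p) * (∏ i, if u i then q else 1 - q) * f v u

/-- Realized treatment in the sub-population design: `W_i = V_i U_i`
(units outside the experiment receive control). -/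
def treatVU {n : ℕ} (v u : Fin n → Bool) : Fin n → ℝ :=
  fun i => ind (v i && u i)

/-- Horvitz–Thompson estimator built from `Y` in the sub-population design:
`τ̂¹(p,q)(v,u) = (1/n) Σ_i [V_i W_i Y_i(W)/(pq) − V_i (1 − W_i) Y_i(W)/(p(1 − q))]`. -/
def tauHat1Sub {n : ℕ} (α β γ ζ : Fin n → Fin n → ℝ) (p q : ℝ)
    (v u : Fin n → Bool) : ℝ :=
  (1 / (n : ℝ)) * ∑ i,
    (ind (v i) * treatVU v u i * Yagg α β γ ζ (treatVU v u) i / (p * q) -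
      ind (v i) * (1 - treatVU v u i) * Yagg α β γ ζ (treatVU v u) i / (p * (1 - q)))

/-- Horvitz–Thompson estimator built from `D` in the sub-population design. -/
def tauHat2Sub {n : ℕ} (α β γ ζ : Fin n → Fin n → ℝ) (p q : ℝ)
    (v u : Fin n → Bool) : ℝ :=
  (1 / (n : ℝ)) * ∑ i,
    (ind (v i) * treatVU v u i * Dagg α β γ ζ (treatVU v u) i / (p * q) -
      ind (v i) * (1 - treatVU v u i) * Dagg α β γ ζ (treatVU v u) i / (p * (1 - q)))

/-! ### Auxiliary lemmas -/

lemma sum_pi_bool (n : ℕ) (H : Fin n → Bool → ℝ) :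
    ∑ v : Fin n → Bool, ∏ i, H i (v i) = ∏ i, (H i true + H i false) := by
  have h := Fintype.prod_sum (κ := fun _ : Fin n => Bool) H
  simp only [Fintype.sum_bool] at h
  exact h.symm

lemma expect_prod (n : ℕ) (p q : ℝ) (f g : Fin n → Bool → ℝ) :
    expectVU n p q (fun v u => (∏ i, f i (v i)) * ∏ i, g i (u i)) =
      (∏ i, (p * f i true + (1 - p) * f i false)) *
        ∏ i, (q * g i true + (1 - q) * g i false) := by
  unfold expectVU
  have h1 : ∀ v : Fin n → Bool,
      ∑ u : Fin n → Bool, (∏ i, if v i then p else 1 - p) * (∏ i, if u i then q else 1 - q) *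
        ((∏ i, f i (v i)) * ∏ i, g i (u i)) =
      (∏ i, (if v i then p else 1 - p) * f i (v i)) *
        ∑ u : Fin n → Bool, ∏ i, (if u i then q else 1 - q) * g i (u i) := by
    intro v
    rw [Finset.mul_sum]
    refine Finset.sum_congr rfl fun u _ => ?_
    rw [Finset.prod_mul_distrib, Finset.prod_mul_distrib]; ring
  simp only [h1]
  rw [← Finset.sum_mul, sum_pi_bool n (fun i b => (if b then p else 1 - p) * f i b),
    sum_pi_bool n (fun i b => (if b then q else 1 - q) * g i b)]
  congr 1 <;> exact Finset.prod_congr rfl fun i _ => by simp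

lemma prod_two {n : ℕ} {i j : Fin n} (hij : i ≠ j) (A B : Fin n → ℝ) :
    (∏ k, (if k = j then A k else if k = i then B k else 1)) = A j * B i := by
  rw [← Finset.mul_prod_erase Finset.univ _ (Finset.mem_univ j),
    ← Finset.mul_prod_erase _ _ (Finset.mem_erase.mpr ⟨hij, Finset.mem_univ i⟩)]
  rw [if_pos rfl, if_neg hij, if_pos rfl]
  rw [Finset.prod_eq_one fun k hk => ?_, mul_one]
  rcases Finset.mem_erase.mp hk with ⟨hki, hk2⟩
  rcases Finset.mem_erase.mp hk2 with ⟨hkj, _⟩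
  rw [if_neg hkj, if_neg hki]

/-- Expectation of a function depending on two sites `j ≠ i`, in factorized form. -/
lemma expect_sites {n : ℕ} (p q : ℝ) {i j : Fin n} (hij : i ≠ j)
    (fj fi gj gi : Bool → ℝ) :
    expectVU n p q (fun v u => (fj (v j) * fi (v i)) * (gj (u j) * gi (u i))) =
      ((p * fj true + (1 - p) * fj false) * (p * fi true + (1 - p) * fi false)) *
        ((q * gj true + (1 - q) * gj false) * (q * gi true + (1 - q) * gi false)) := by
  have h := expect_prod n p q
    (fun k b => if k = j then fj b else if k = i then fi b else 1)
    (fun k b => if k = j then gj b else if k = i then gi b else 1)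
  have hL : (fun v u : Fin n → Bool =>
      (∏ k, (if k = j then fj (v k) else if k = i then fi (v k) else 1)) *
        ∏ k, (if k = j then gj (u k) else if k = i then gi (u k) else 1)) =
      fun v u => (fj (v j) * fi (v i)) * (gj (u j) * gi (u i)) := by
    funext v u
    rw [prod_two hij, prod_two hij]
  rw [hL] at h
  rw [h]
  congr 1
  · rw [← prod_two (A := fun _ => p * fj true + (1 - p) * fj false)
      (B := fun _ => p * fi true + (1 - p) * fi false) hij]
    exact Finset.prod_congr rfl fun k _ => by
      by_cases h1 : k = j <;> by_cases h2 : k = i <;> simp [h1, h2, hij] <;> ring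
  · rw [← prod_two (A := fun _ => q * gj true + (1 - q) * gj false)
      (B := fun _ => q * gi true + (1 - q) * gi false) hij]
    exact Finset.prod_congr rfl fun k _ => by
      by_cases h1 : k = j <;> by_cases h2 : k = i <;> simp [h1, h2, hij] <;> ring

lemma expectVU_sum {n : ℕ} (p q : ℝ) {ι : Type*} (s : Finset ι)
    (F : ι → (Fin n → Bool) → (Fin n → Bool) → ℝ) :
    expectVU n p q (fun v u => ∑ k ∈ s, F k v u) = ∑ k ∈ s, expectVU n p q (F k) := by
  unfold expectVU
  simp only [Finset.mul_sum]
  rw [show (∑ v : Fin n → Bool, ∑ u : Fin n → Bool, ∑ k ∈ s,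
      (∏ i, if v i then p else 1 - p) * (∏ i, if u i then q else 1 - q) * F k v u)
      = ∑ v : Fin n → Bool, ∑ k ∈ s, ∑ u : Fin n → Bool,
      (∏ i, if v i then p else 1 - p) * (∏ i, if u i then q else 1 - q) * F k v u
    from Finset.sum_congr rfl fun v _ => Finset.sum_comm]
  exact Finset.sum_comm

lemma expectVU_const_mul {n : ℕ} (p q : ℝ) (c : ℝ)
    (f : (Fin n → Bool) → (Fin n → Bool) → ℝ) :
    expectVU n p q (fun v u => c * f v u) = c * expectVU n p q f := by
  unfold expectVU
  rw [Finset.mul_sum]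
  refine Finset.sum_congr rfl fun v _ => ?_
  rw [Finset.mul_sum]
  exact Finset.sum_congr rfl fun u _ => by ring

lemma expectVU_lin4 {n : ℕ} (p q : ℝ) (c1 c2 c3 c4 : ℝ)
    (m1 m2 m3 m4 : (Fin n → Bool) → (Fin n → Bool) → ℝ) :
    expectVU n p q (fun v u => c1 * m1 v u + c2 * m2 v u + c3 * m3 v u + c4 * m4 v u) =
      c1 * expectVU n p q m1 + c2 * expectVU n p q m2 +
        c3 * expectVU n p q m3 + c4 * expectVU n p q m4 := by
  unfold expectVU
  simp only [Finset.mul_sum, ← Finset.sum_add_distrib]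
  refine Finset.sum_congr rfl fun v _ => ?_
  refine Finset.sum_congr rfl fun u _ => ?_
  ring

/-- Per-pair term of the estimator `τ̂²`. -/
def wpair {n : ℕ} (α β γ ζ : Fin n → Fin n → ℝ) (p q : ℝ) (j i : Fin n)
    (v u : Fin n → Bool) : ℝ :=
  ind (v j) * treatVU v u j * zDyad α β γ ζ (treatVU v u) j i / (p * q) -
    ind (v j) * (1 - treatVU v u j) * zDyad α β γ ζ (treatVU v u) j i / (p * (1 - q))

lemma tauHat2Sub_eq {n : ℕ} (α β γ ζ : Fin n → Fin n → ℝ) (p q : ℝ)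
    (v u : Fin n → Bool) :
    tauHat2Sub α β γ ζ p q v u =
      (1 / (n : ℝ)) * ∑ j, ∑ i ∈ ({j}ᶜ : Finset (Fin n)), wpair α β γ ζ p q j i v u := by
  unfold tauHat2Sub Dagg wpair
  congr 1
  refine Finset.sum_congr rfl fun j _ => ?_
  rw [Finset.mul_sum, Finset.mul_sum, Finset.sum_div, Finset.sum_div,
    ← Finset.sum_sub_distrib]

lemma expect_wpair {n : ℕ} (α β γ ζ : Fin n → Fin n → ℝ) (p q : ℝ)
    (hp : p ≠ 0) (hq : q ≠ 0) (hq1 : (1 : ℝ) - q ≠ 0)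
    {i j : Fin n} (hij : i ≠ j) :
    expectVU n p q (wpair α β γ ζ p q j i) = β j i + p * q * ζ j i := by
  have hdecomp : wpair α β γ ζ p q j i = fun v u =>
      ((α j i + β j i) / (p * q) + α j i / (p * (1 - q))) *
          ((ind (v j) * 1) * (ind (u j) * 1)) +
        ((γ j i + ζ j i) / (p * q) + γ j i / (p * (1 - q))) *
          ((ind (v j) * ind (v i)) * (ind (u j) * ind (u i))) +
        (-(α j i / (p * (1 - q)))) * ((ind (v j) * 1) * (1 * 1)) +
        (-(γ j i / (p * (1 - q)))) * ((ind (v j) * ind (v i)) * (1 * ind (u i))) := by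
    funext v u
    unfold wpair zDyad treatVU
    cases hvj : v j <;> cases huj : u j <;> cases hvi : v i <;> cases hui : u i <;>
      simp [ind, hvj, huj, hvi, hui] <;> ring
  rw [hdecomp,
    expectVU_lin4 p q _ _ _ _
      (fun v u => (ind (v j) * 1) * (ind (u j) * 1))
      (fun v u => (ind (v j) * ind (v i)) * (ind (u j) * ind (u i)))
      (fun v u => (ind (v j) * 1) * (1 * 1))
      (fun v u => (ind (v j) * ind (v i)) * (1 * ind (u i))),
    expect_sites p q hij ind (fun _ => 1) ind (fun _ => 1),
    expect_sites p q hij ind ind ind ind,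
    expect_sites p q hij ind (fun _ => 1) (fun _ => 1) (fun _ => 1),
    expect_sites p q hij ind ind (fun _ => 1) ind]
  simp only [ind]
  norm_num
  field_simp
  ring

/-- Proposition 5: Under the sub-population Bernoulli design with
in-experiment probability `p` and treatment probability `q`,
`E[τ̂²(p,q)] = (1/n) Σ_{i ≠ j} (β_{i,j} + pq ζ_{i,j})`. -/
theorem expect_tauHat2Sub
    (n : ℕ) (hn : 1 ≤ n) (α β γ ζ : Fin n → Fin n → ℝ)
    (p q : ℝ) (hp0 : 0 < p) (hp1 : p ≤ 1) (hq0 : 0 < q) (hq1 : q < 1) :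
    expectVU n p q (tauHat2Sub α β γ ζ p q) =
      (1 / (n : ℝ)) * ∑ j, ∑ i ∈ ({j}ᶜ : Finset (Fin n)), (β i j + p * q * ζ i j) := by
  have hp : p ≠ 0 := ne_of_gt hp0
  have hq : q ≠ 0 := ne_of_gt hq0
  have hq1' : (1 : ℝ) - q ≠ 0 := by linarith
  have h1 : tauHat2Sub α β γ ζ p q = fun v u =>
      (1 / (n : ℝ)) * ∑ j, ∑ i ∈ ({j}ᶜ : Finset (Fin n)), wpair α β γ ζ p q j i v u := by
    funext v u; exact tauHat2Sub_eq α β γ ζ p q v u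
  rw [h1, expectVU_const_mul, expectVU_sum]
  have h2 : ∀ j : Fin n,
      expectVU n p q (fun v u => ∑ i ∈ ({j}ᶜ : Finset (Fin n)), wpair α β γ ζ p q j i v u)
        = ∑ i ∈ ({j}ᶜ : Finset (Fin n)), (β j i + p * q * ζ j i) := by
    intro j
    rw [expectVU_sum]
    refine Finset.sum_congr rfl fun i hi => ?_
    have hij : i ≠ j := by simpa using hi
    exact expect_wpair α β γ ζ p q hp hq hq1' hij
  simp only [h2]
  congr 1
  exact Finset.sum_comm' fun j i => by simp [ne_comm]
end
end

section
/- (Proposition 7, edge-level form) Under the two-stage cluster design with cluster in-experiment probability p and treatment probability π, the expectation of the Horvitz–Thompson estimator built from the diffusion metric D satisfies E[τ̂²_c(p,π)] = (1/n) Σ_{i ≠ j} (β_{i,j} + κ_{i,j} ζ_{i,j}), where κ_{i,j} = π if units i and j belong to the same cluster and κ_{i,j} = pπ otherwise. -/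
open Finset

noncomputable section

/-- Expectation over the two-stage cluster design: `b ∈ {0,1}^C` are i.i.d.
Bernoulli(`p`) cluster in-experiment indicators and `u ∈ {0,1}^n` are i.i.d.
Bernoulli(`q`) treatment coins, all mutually independent. -/
def expectBU (n : ℕ) {C : Type} [Fintype C] [DecidableEq C] (p q : ℝ)
    (f : (C → Bool) → (Fin n → Bool) → ℝ) : ℝ :=
  ∑ b : C → Bool, ∑ u : Fin n → Bool,
    (∏ k, if b k then p else 1 - p) * (∏ i, if u i then q else 1 - q) * f b u

/-- Realized treatment in the two-stage cluster design: `V_i = B_{c(i)}`,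
`W_i = V_i U_i` (units outside the experiment receive control). -/
def treatBU {n : ℕ} {C : Type} (c : Fin n → C) (b : C → Bool) (u : Fin n → Bool) :
    Fin n → ℝ :=
  fun i => ind (b (c i) && u i)

/-- Horvitz–Thompson estimator built from `Y` in the two-stage cluster design:
`τ̂¹_c(p,q)(b,u) = (1/n) Σ_i [V_i W_i Y_i(W)/(pq) − V_i (1 − W_i) Y_i(W)/(p(1 − q))]`. -/
def tauHat1Clu {n : ℕ} {C : Type} (α β γ ζ : Fin n → Fin n → ℝ) (c : Fin n → C)
    (p q : ℝ) (b : C → Bool) (u : Fin n → Bool) : ℝ :=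
  (1 / (n : ℝ)) * ∑ i,
    (ind (b (c i)) * treatBU c b u i * Yagg α β γ ζ (treatBU c b u) i / (p * q) -
      ind (b (c i)) * (1 - treatBU c b u i) * Yagg α β γ ζ (treatBU c b u) i /
        (p * (1 - q)))

/-- Horvitz–Thompson estimator built from `D` in the two-stage cluster design. -/
def tauHat2Clu {n : ℕ} {C : Type} (α β γ ζ : Fin n → Fin n → ℝ) (c : Fin n → C)
    (p q : ℝ) (b : C → Bool) (u : Fin n → Bool) : ℝ :=
  (1 / (n : ℝ)) * ∑ i,
    (ind (b (c i)) * treatBU c b u i * Dagg α β γ ζ (treatBU c b u) i / (p * q) -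
      ind (b (c i)) * (1 - treatBU c b u i) * Dagg α β γ ζ (treatBU c b u) i /
        (p * (1 - q)))

/-! The estimator splits into one term per edge `(i, j)`, and each term is a linear
combination of monomials `∏_{k ∈ S} B_k · ∏_{l ∈ T} U_l` in the cluster and treatment coins.
Because the coins are independent Bernoulli variables, such a monomial has expectation
`p ^ #S * q ^ #T`; as `S` is a set of clusters, `V_i V_j` has expectation `p` when `i` and `j`
share a cluster and `p²` otherwise, which is where `κ_{i,j}` comes from. -/

theorem sum_prod_bernoulli_mul_prod_ind {ι : Type*} [Fintype ι] [DecidableEq ι] (p : ℝ)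
    (S : Finset ι) :
    ∑ b : ι → Bool, (∏ k, if b k then p else 1 - p) * ∏ k ∈ S, ind (b k) = p ^ #S := by
  calc ∑ b : ι → Bool, (∏ k, if b k then p else 1 - p) * ∏ k ∈ S, ind (b k)
      = ∑ b : ι → Bool,
          ∏ k, (if b k then p else 1 - p) * (if k ∈ S then ind (b k) else 1) := by
        refine sum_congr rfl fun b _ => ?_
        rw [prod_mul_distrib, prod_ite_mem, univ_inter]
    _ = ∏ k, ∑ x : Bool, (if x then p else 1 - p) * (if k ∈ S then ind x else 1) :=
        (Fintype.prod_sum fun k (x : Bool) =>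
          (if x then p else 1 - p) * (if k ∈ S then ind x else 1)).symm
    _ = ∏ k, if k ∈ S then p else 1 := by
        refine prod_congr rfl fun k _ => ?_
        split_ifs <;> simp [ind]
    _ = p ^ #S := by rw [prod_ite_mem, univ_inter, prod_const]

theorem prod_pair_ind {ι : Type*} [DecidableEq ι] (x : ι → Bool) (k l : ι) :
    ∏ m ∈ {k, l}, ind (x m) = ind (x k) * ind (x l) := by
  by_cases hkl : k = l
  · subst hkl
    rw [pair_eq_singleton, prod_singleton]
    cases x k <;> simp [ind]
  · exact prod_pair hkl

section Expectation

variable {n : ℕ} {C : Type} [Fintype C] [DecidableEq C] (p q : ℝ)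

theorem expectBU_const_mul (r : ℝ) (f : (C → Bool) → (Fin n → Bool) → ℝ) :
    expectBU n p q (fun b u => r * f b u) = r * expectBU n p q f := by
  simp only [expectBU, mul_sum]
  exact sum_congr rfl fun _ _ => sum_congr rfl fun _ _ => by ring

theorem expectBU_add (f g : (C → Bool) → (Fin n → Bool) → ℝ) :
    expectBU n p q (fun b u => f b u + g b u) = expectBU n p q f + expectBU n p q g := by
  simp only [expectBU, mul_add, sum_add_distrib]

theorem expectBU_sub (f g : (C → Bool) → (Fin n → Bool) → ℝ) :
    expectBU n p q (fun b u => f b u - g b u) = expectBU n p q f - expectBU n p q g := by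
  simp only [expectBU, mul_sub, sum_sub_distrib]

theorem expectBU_sum {A : Type*} (s : Finset A)
    (f : A → (C → Bool) → (Fin n → Bool) → ℝ) :
    expectBU n p q (fun b u => ∑ a ∈ s, f a b u) = ∑ a ∈ s, expectBU n p q (f a) := by
  simp only [expectBU, mul_sum]
  exact (sum_congr rfl fun _ _ => sum_comm).trans sum_comm

def indMonomial (S : Finset C) (T : Finset (Fin n)) (b : C → Bool) (u : Fin n → Bool) : ℝ :=
  (∏ k ∈ S, ind (b k)) * ∏ l ∈ T, ind (u l)

theorem expectBU_indMonomial (S : Finset C) (T : Finset (Fin n)) :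
    expectBU n p q (indMonomial S T) = p ^ #S * q ^ #T := by
  rw [← sum_prod_bernoulli_mul_prod_ind p S, ← sum_prod_bernoulli_mul_prod_ind q T,
    sum_mul_sum]
  exact sum_congr rfl fun _ _ => sum_congr rfl fun _ _ => by rw [indMonomial]; ring

end Expectation

def tauHat2CluEdge {n : ℕ} {C : Type} (α β γ ζ : Fin n → Fin n → ℝ) (c : Fin n → C)
    (p q : ℝ) (i j : Fin n) (b : C → Bool) (u : Fin n → Bool) : ℝ :=
  ind (b (c i)) * treatBU c b u i * zDyad α β γ ζ (treatBU c b u) i j / (p * q) -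
    ind (b (c i)) * (1 - treatBU c b u i) * zDyad α β γ ζ (treatBU c b u) i j /
      (p * (1 - q))

section Edge

variable {n : ℕ} (α β γ ζ : Fin n → Fin n → ℝ) {C : Type} (c : Fin n → C)
  (p q : ℝ)

theorem tauHat2Clu_eq_sum_edge :
    tauHat2Clu α β γ ζ c p q = fun b u =>
      (1 / (n : ℝ)) * ∑ i, ∑ j ∈ ({i}ᶜ : Finset (Fin n)),
        tauHat2CluEdge α β γ ζ c p q i j b u := by
  funext b u
  simp only [tauHat2Clu, Dagg, tauHat2CluEdge, mul_sum, sum_div, ← sum_sub_distrib]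

-- `W_i = V_i U_i`, and the coins are idempotent: `V_i² = V_i`, `U_i² = U_i`.
theorem tauHat2CluEdge_eq_indMonomial [DecidableEq C] (i j : Fin n) :
    tauHat2CluEdge α β γ ζ c p q i j = fun b u =>
      ((α i j + β i j) / (p * q) + α i j / (p * (1 - q))) * indMonomial {c i} {i} b u
        + ((γ i j + ζ i j) / (p * q) + γ i j / (p * (1 - q)))
          * indMonomial {c i, c j} {i, j} b u
        - α i j / (p * (1 - q)) * indMonomial {c i} ∅ b u
        - γ i j / (p * (1 - q)) * indMonomial {c i, c j} {j} b u := by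
  funext b u
  simp only [tauHat2CluEdge, indMonomial, zDyad, treatBU, prod_pair_ind, prod_singleton,
    prod_empty]
  cases b (c i) <;> cases b (c j) <;> cases u i <;> cases u j
  all_goals simp only [ind, Bool.true_and, Bool.false_and, if_true, if_false, Bool.false_eq_true]
  all_goals ring

end Edge

theorem expectBU_tauHat2CluEdge {n : ℕ} (α β γ ζ : Fin n → Fin n → ℝ)
    {C : Type} [Fintype C] [DecidableEq C] (c : Fin n → C)
    {p q : ℝ} (hp : p ≠ 0) (hq0 : q ≠ 0) (hq1 : q ≠ 1) {i j : Fin n} (hij : i ≠ j) :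
    expectBU n p q (tauHat2CluEdge α β γ ζ c p q i j)
      = β i j + (if c i = c j then q else p * q) * ζ i j := by
  have h1q : 1 - q ≠ 0 := sub_ne_zero.mpr (Ne.symm hq1)
  simp only [tauHat2CluEdge_eq_indMonomial, expectBU_add, expectBU_sub, expectBU_const_mul,
    expectBU_indMonomial, card_singleton, card_pair hij, card_empty]
  by_cases hc : c i = c j
  · rw [if_pos hc, hc, pair_eq_singleton, card_singleton]
    field_simp
    ring
  · rw [if_neg hc, card_pair hc]
    field_simp
    ring

theorem expect_tauHat2Clu_general
    (n : ℕ) (α β γ ζ : Fin n → Fin n → ℝ)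
    (C : Type) [Fintype C] [DecidableEq C] (c : Fin n → C)
    (p q : ℝ) (hp0 : 0 < p) (hq0 : 0 < q) (hq1 : q < 1) :
    expectBU n p q (tauHat2Clu α β γ ζ c p q) =
      (1 / (n : ℝ)) * ∑ j, ∑ i ∈ ({j}ᶜ : Finset (Fin n)),
        (β i j + (if c i = c j then q else p * q) * ζ i j) := by
  have hedge : ∀ i, ∀ j ∈ ({i}ᶜ : Finset (Fin n)),
      expectBU n p q (tauHat2CluEdge α β γ ζ c p q i j)
        = β i j + (if c i = c j then q else p * q) * ζ i j := fun i j hj =>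
    expectBU_tauHat2CluEdge α β γ ζ c hp0.ne' hq0.ne' hq1.ne
      (Ne.symm (by simpa using hj))
  calc expectBU n p q (tauHat2Clu α β γ ζ c p q)
      = (1 / (n : ℝ)) * ∑ i, ∑ j ∈ ({i}ᶜ : Finset (Fin n)),
          expectBU n p q (tauHat2CluEdge α β γ ζ c p q i j) := by
        simp only [tauHat2Clu_eq_sum_edge, expectBU_const_mul, expectBU_sum]
    _ = (1 / (n : ℝ)) * ∑ j, ∑ i ∈ ({j}ᶜ : Finset (Fin n)),
          (β i j + (if c i = c j then q else p * q) * ζ i j) := by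
        rw [sum_congr rfl fun i _ => sum_congr rfl (hedge i)]
        exact congrArg _ (sum_comm' fun i j => by simp [ne_comm])

/-- Proposition 7, edge-level form: Under the two-stage cluster design
with cluster in-experiment probability `p` and treatment probability `q`,
`E[τ̂²_c(p,q)] = (1/n) Σ_{i ≠ j} (β_{i,j} + κ_{i,j} ζ_{i,j})`, where `κ_{i,j} = q` if
`i` and `j` are in the same cluster and `κ_{i,j} = pq` otherwise. -/
theorem expect_tauHat2Clu
    (n : ℕ) (hn : 1 ≤ n) (α β γ ζ : Fin n → Fin n → ℝ)
    (C : Type) [Fintype C] [DecidableEq C] (c : Fin n → C)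
    (p q : ℝ) (hp0 : 0 < p) (hp1 : p ≤ 1) (hq0 : 0 < q) (hq1 : q < 1) :
    expectBU n p q (tauHat2Clu α β γ ζ c p q) =
      (1 / (n : ℝ)) * ∑ j, ∑ i ∈ ({j}ᶜ : Finset (Fin n)),
        (β i j + (if c i = c j then q else p * q) * ζ i j) :=
  expect_tauHat2Clu_general n α β γ ζ C c p q hp0 hq0 hq1
end
end
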